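/- arXiv:1710.03442 — 4 statements merged into one kernel-verified Lean document; each statement's English description precedes it below -/
import Mathlib

section
/- Let n ≥ 1, and let x, y ∈ ℝⁿ. If the entries of x sum to 0 (i.e. xᵀe = 0 where e is the all-ones vector), then |xᵀy| ≤ ‖x‖₁ · (max_{i,j} |yᵢ − yⱼ|) / 2. -/
open BigOperators

/-!
Since `∑ i, x i = 0`, the inner product `∑ i, x i * y i` is unchanged when `y` is shifted by a
constant `c`. Taking `c` to be the midpoint of the range of `y` makes every `|y i - c|` at most half
the oscillation `⨆ i, ⨆ j, |y i - y j|`, and the bound follows from the triangle inequality.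
-/

namespace Finset

variable {ι : Type*} (s : Finset ι) {x : ι → ℝ}

theorem sum_mul_sub_const_of_sum_eq_zero (hx : ∑ i ∈ s, x i = 0) (y : ι → ℝ) (c : ℝ) :
    ∑ i ∈ s, x i * (y i - c) = ∑ i ∈ s, x i * y i := by
  simp only [mul_sub, sum_sub_distrib, ← sum_mul, hx, zero_mul, sub_zero]

theorem abs_sum_mul_le_of_sum_eq_zero (hx : ∑ i ∈ s, x i = 0) {y : ι → ℝ} {c r : ℝ}
    (hy : ∀ i ∈ s, |y i - c| ≤ r) :
    |∑ i ∈ s, x i * y i| ≤ (∑ i ∈ s, |x i|) * r := by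
  calc |∑ i ∈ s, x i * y i| = |∑ i ∈ s, x i * (y i - c)| := by
        rw [sum_mul_sub_const_of_sum_eq_zero s hx]
    _ ≤ ∑ i ∈ s, |x i| * |y i - c| := by
        simpa only [abs_mul] using abs_sum_le_sum_abs (fun i => x i * (y i - c)) s
    _ ≤ ∑ i ∈ s, |x i| * r := by
        gcongr with i hi
        exact hy i hi
    _ = (∑ i ∈ s, |x i|) * r := (sum_mul _ _ _).symm

end Finset

theorem abs_sub_le_iSup_iSup_abs_sub {ι : Type*} [Finite ι] (y : ι → ℝ) (i j : ι) :
    |y i - y j| ≤ ⨆ i, ⨆ j, |y i - y j| :=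
  le_ciSup_of_le (Set.finite_range _).bddAbove i <|
    le_ciSup (f := fun j => |y i - y j|) (Set.finite_range _).bddAbove j

theorem exists_forall_abs_sub_le_iSup_iSup_abs_sub_div_two {ι : Type*} [Finite ι]
    (y : ι → ℝ) : ∃ c, ∀ i, |y i - c| ≤ (⨆ i, ⨆ j, |y i - y j|) / 2 := by
  cases isEmpty_or_nonempty ι with
  | inl => exact ⟨0, isEmptyElim⟩
  | inr =>
    obtain ⟨imax, hmax⟩ := Finite.exists_max y
    obtain ⟨imin, hmin⟩ := Finite.exists_min y
    have hosc := (le_abs_self _).trans (abs_sub_le_iSup_iSup_abs_sub y imax imin)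
    refine ⟨(y imax + y imin) / 2, fun i => abs_le.mpr ⟨?_, ?_⟩⟩ <;>
      linarith [hmax i, hmin i]

theorem bound_of_inner_product_general (n : ℕ) (x y : Fin n → ℝ)
    (hx : ∑ i, x i = 0) :
    |∑ i, x i * y i| ≤ (∑ i, |x i|) * (⨆ i : Fin n, ⨆ j : Fin n, |y i - y j|) / 2 := by
  obtain ⟨c, hc⟩ := exists_forall_abs_sub_le_iSup_iSup_abs_sub_div_two y
  rw [mul_div_assoc]
  exact Finset.univ.abs_sum_mul_le_of_sum_eq_zero hx fun i _ => hc i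

/-- For `x, y : Fin n → ℝ` with `n ≥ 1`, if the entries of `x` sum to `0`,
then `|xᵀy| ≤ ‖x‖₁ ⋅ (max_{i,j} |yᵢ − yⱼ|) / 2`. -/
theorem bound_of_inner_product (n : ℕ) (hn : 1 ≤ n) (x y : Fin n → ℝ)
    (hx : ∑ i, x i = 0) :
    |∑ i, x i * y i| ≤ (∑ i, |x i|) * (⨆ i : Fin n, ⨆ j : Fin n, |y i - y j|) / 2 :=
  bound_of_inner_product_general n x y hx
end

section
/- Let P^{π'}, P^π, P^β be n×n row-stochastic real matrices, γ ∈ (0,1), α ∈ [0,1], and ρ₀ ∈ ℝⁿ a vector with nonnegative entries summing to 1. Define row vectors ρ^{π'}ᵀ = ρ₀ᵀ(I − γP^{π'})⁻¹, ρ^πᵀ = ρ₀ᵀ(I − γP^π)⁻¹, ρ^βᵀ = ρ₀ᵀ(I − γP^β)⁻¹. Then (ρ^{π'} − (α ρ^π + (1−α) ρ^β))ᵀ = γ (α ρ^πᵀ(P^{π'} − P^π) + (1−α) ρ^βᵀ(P^{π'} − P^β)) (I − γP^{π'})⁻¹. -/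
open Matrix BigOperators

def IsStochastic {m n : Type*} [Fintype m] [Fintype n] (M : Matrix m n ℝ) : Prop :=
  (∀ i j, 0 ≤ M i j) ∧ ∀ i, ∑ j, M i j = 1

/-!
Write `M_P = 1 - γ P`. A stochastic matrix has `ℓ^∞` operator norm at most `1`, so for `|γ| < 1`
the Neumann series shows that `M_P` is invertible. The resolvent identity
`M_Q⁻¹ - M_P⁻¹ = M_Q⁻¹ (M_P - M_Q) M_P⁻¹ = γ M_Q⁻¹ (P - Q) M_P⁻¹` compares the discounted
distribution of `P` with that of `Q`; the mixture identity is the convex combination of the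
instances `Q = P^π` and `Q = P^β`.
-/

namespace IsStochastic

variable {ι : Type*} [Fintype ι] {P : Matrix ι ι ℝ}

attribute [local instance] Matrix.linftyOpNormedAddCommGroup Matrix.linftyOpNormedRing
  Matrix.linftyOpNormedAlgebra

theorem linfty_opNNNorm_le_one (hP : IsStochastic P) : ‖P‖₊ ≤ 1 := by
  rw [linfty_opNNNorm_def]
  refine Finset.sup_le fun i _ => le_of_eq (NNReal.eq ?_)
  push_cast
  rw [← hP.2 i]
  exact Finset.sum_congr rfl fun j _ => abs_of_nonneg (hP.1 i j)

theorem isUnit_one_sub_smul [DecidableEq ι] (hP : IsStochastic P) {γ : ℝ} (hγ : |γ| < 1) :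
    IsUnit (1 - γ • P) := by
  have : CompleteSpace (Matrix ι ι ℝ) := FiniteDimensional.complete ℝ _
  refine isUnit_one_sub_of_norm_lt_one ?_
  calc ‖γ • P‖ ≤ |γ| * ‖P‖ := by rw [norm_smul, Real.norm_eq_abs]
    _ ≤ |γ| * 1 := by gcongr; exact_mod_cast hP.linfty_opNNNorm_le_one
    _ < 1 := by linarith

end IsStochastic

namespace Matrix

variable {ι : Type*} [Fintype ι] [DecidableEq ι]

theorem inv_sub_inv_of_isUnit {α : Type*} [CommRing α] {A B : Matrix ι ι α} (hA : IsUnit A) (hB : IsUnit B) :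
    A⁻¹ - B⁻¹ = B⁻¹ * (B - A) * A⁻¹ := by
  rw [Matrix.mul_sub, Matrix.sub_mul, nonsing_inv_mul B ((isUnit_iff_isUnit_det B).mp hB),
    Matrix.mul_assoc, mul_nonsing_inv A ((isUnit_iff_isUnit_det A).mp hA), Matrix.one_mul,
    Matrix.mul_one]

theorem vecMul_inv_one_sub_smul_sub {P Q : Matrix ι ι ℝ} {γ : ℝ} (hP : IsUnit (1 - γ • P))
    (hQ : IsUnit (1 - γ • Q)) (v : ι → ℝ) :
    v ᵥ* (1 - γ • P)⁻¹ - v ᵥ* (1 - γ • Q)⁻¹ =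
      γ • ((v ᵥ* (1 - γ • Q)⁻¹) ᵥ* (P - Q)) ᵥ* (1 - γ • P)⁻¹ := by
  have hdiff : (1 - γ • Q) - (1 - γ • P) = γ • (P - Q) := by rw [smul_sub]; abel
  rw [← vecMul_sub, inv_sub_inv_of_isUnit hP hQ, hdiff, vecMul_vecMul, vecMul_vecMul,
    Matrix.mul_smul, Matrix.smul_mul, vecMul_smul, Matrix.mul_assoc]

end Matrix

theorem mixture_state_distribution_identity_general (n : ℕ)
    (Pπ' Pπ Pβ : Matrix (Fin n) (Fin n) ℝ)
    (hPπ' : IsStochastic Pπ') (hPπ : IsStochastic Pπ) (hPβ : IsStochastic Pβ)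
    (γ : ℝ) (hγ : γ ∈ Set.Ioo (0 : ℝ) 1) (α : ℝ)
    (ρ₀ : Fin n → ℝ) :
    let ρπ' := ρ₀ ᵥ* (1 - γ • Pπ')⁻¹
    let ρπ := ρ₀ ᵥ* (1 - γ • Pπ)⁻¹
    let ρβ := ρ₀ ᵥ* (1 - γ • Pβ)⁻¹
    ρπ' - (α • ρπ + (1 - α) • ρβ) =
      γ • ((α • (ρπ ᵥ* (Pπ' - Pπ)) + (1 - α) • (ρβ ᵥ* (Pπ' - Pβ))) ᵥ* (1 - γ • Pπ')⁻¹) := by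
  intro ρπ' ρπ ρβ
  have hγ_abs : |γ| < 1 := abs_lt.mpr ⟨by linarith [hγ.1], hγ.2⟩
  have hπ' := hPπ'.isUnit_one_sub_smul hγ_abs
  have hπ := vecMul_inv_one_sub_smul_sub hπ' (hPπ.isUnit_one_sub_smul hγ_abs) ρ₀
  have hβ := vecMul_inv_one_sub_smul_sub hπ' (hPβ.isUnit_one_sub_smul hγ_abs) ρ₀
  calc ρπ' - (α • ρπ + (1 - α) • ρβ) = α • (ρπ' - ρπ) + (1 - α) • (ρπ' - ρβ) := by module
    _ = _ := by
      rw [hπ, hβ, add_vecMul, smul_vecMul, smul_vecMul, smul_add, smul_comm γ α,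
        smul_comm γ (1 - α)]

/-- identity for the difference of discounted state distributions:
`(ρ^{π'} − (α ρ^π + (1−α) ρ^β))ᵀ
  = γ (α ρ^πᵀ(P^{π'} − P^π) + (1−α) ρ^βᵀ(P^{π'} − P^β)) (I − γP^{π'})⁻¹`. -/
theorem mixture_state_distribution_identity (n : ℕ)
    (Pπ' Pπ Pβ : Matrix (Fin n) (Fin n) ℝ)
    (hPπ' : IsStochastic Pπ') (hPπ : IsStochastic Pπ) (hPβ : IsStochastic Pβ)
    (γ : ℝ) (hγ : γ ∈ Set.Ioo (0 : ℝ) 1) (α : ℝ) (hα : α ∈ Set.Icc (0 : ℝ) 1)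
    (ρ₀ : Fin n → ℝ) (hρ₀pos : ∀ i, 0 ≤ ρ₀ i) (hρ₀sum : ∑ i, ρ₀ i = 1) :
    let ρπ' := ρ₀ ᵥ* (1 - γ • Pπ')⁻¹
    let ρπ := ρ₀ ᵥ* (1 - γ • Pπ)⁻¹
    let ρβ := ρ₀ ᵥ* (1 - γ • Pβ)⁻¹
    ρπ' - (α • ρπ + (1 - α) • ρβ) =
      γ • ((α • (ρπ ᵥ* (Pπ' - Pπ)) + (1 - α) • (ρβ ᵥ* (Pπ' - Pβ))) ᵥ* (1 - γ • Pπ')⁻¹) :=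
  mixture_state_distribution_identity_general n Pπ' Pπ Pβ hPπ' hPπ hPβ γ hγ α ρ₀
end

section
/- Let P^{π'}, P^π, P^β be n×n row-stochastic real matrices, γ ∈ (0,1), α ∈ [0,1], and ρ₀ ∈ ℝⁿ a vector with nonnegative entries summing to 1. Define row vectors ρ^{π'}ᵀ = ρ₀ᵀ(I − γP^{π'})⁻¹, ρ^πᵀ = ρ₀ᵀ(I − γP^π)⁻¹, ρ^βᵀ = ρ₀ᵀ(I − γP^β)⁻¹. Then ‖ρ^{π'} − (α ρ^π + (1−α) ρ^β)‖₁ ≤ (γ/(1−γ)) · (α ‖P^{π'} − P^π‖∞ + (1−α) ‖P^{π'} − P^β‖∞) · ‖(I − γP^{π'})⁻¹‖∞. -/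
/-! Each discounted distribution is `ρ₀` times a resolvent `(I - γP)⁻¹`. The resolvent identity
`(I - γP')⁻¹ - (I - γQ)⁻¹ = γ (I - γP')⁻¹ (P' - Q) (I - γQ)⁻¹` and the Neumann-series bound
`‖(I - γQ)⁻¹‖∞ ≤ 1 / (1 - γ)` for stochastic `Q` give
`‖ρ^{π'} - ρ^Q‖₁ ≤ γ / (1 - γ) ‖P' - Q‖∞ ‖(I - γP')⁻¹‖∞` for `Q = P^π, P^β`, and convexity of
`‖·‖₁` handles the mixture. Both norms are the `ℓ∞` operator norm on rectangular matrices, with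
`‖x‖₁` read as the operator norm of the row matrix `x`. -/

open Matrix BigOperators

/-- `‖x‖₁`: the sum of the absolute values of the entries of a vector. -/
noncomputable def norm1 {n : Type*} [Fintype n] (x : n → ℝ) : ℝ := ∑ i, |x i|

/-- `‖M‖∞`: the maximum over rows of the sum of absolute values of the entries. -/
noncomputable def normInfM {m n : Type*} [Fintype m] [Fintype n] (M : Matrix m n ℝ) : ℝ :=
  ⨆ i, ∑ j, |M i j|

attribute [local instance] Matrix.linftyOpNormedAddCommGroup Matrix.linftyOpNormedRing
  Matrix.linftyOpNormedSpace

section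

variable {m n : Type*} [Fintype m] [Fintype n]

lemma normInfM_eq_norm (M : Matrix m n ℝ) : normInfM M = ‖M‖ := by
  simp only [normInfM, Matrix.linfty_opNorm_def, Finset.sup_univ_eq_ciSup, NNReal.coe_iSup,
    NNReal.coe_sum, coe_nnnorm, Real.norm_eq_abs]

lemma norm1_eq_norm_replicateRow (x : n → ℝ) : norm1 x = ‖replicateRow Unit x‖ := by
  simp [norm1, Matrix.linfty_opNorm_replicateRow]

lemma norm1_vecMul_le (x : m → ℝ) (M : Matrix m n ℝ) :
    norm1 (x ᵥ* M) ≤ norm1 x * normInfM M := by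
  simpa [norm1_eq_norm_replicateRow, normInfM_eq_norm, replicateRow_vecMul]
    using Matrix.linfty_opNorm_mul (replicateRow Unit x) M

lemma norm1_sub_convexComb_le (u v w : n → ℝ) {α : ℝ} (hα₀ : 0 ≤ α) (hα₁ : α ≤ 1) :
    norm1 (u - (α • v + (1 - α) • w)) ≤ α * norm1 (u - v) + (1 - α) * norm1 (u - w) := by
  have h : u - (α • v + (1 - α) • w) = α • (u - v) + (1 - α) • (u - w) := by module
  simpa [h, norm1_eq_norm_replicateRow, replicateRow_add, replicateRow_smul] using
    (convexOn_univ_norm).2 (Set.mem_univ (replicateRow Unit (u - v)))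
      (Set.mem_univ (replicateRow Unit (u - w))) hα₀ (sub_nonneg.2 hα₁) (by ring)

lemma IsStochastic.normInfM_le_one {P : Matrix m n ℝ} (hP : IsStochastic P) :
    normInfM P ≤ 1 :=
  Real.iSup_le (fun i ↦ by simp [abs_of_nonneg (hP.1 i _), hP.2 i]) zero_le_one

lemma isStochastic_one [DecidableEq n] : IsStochastic (1 : Matrix n n ℝ) :=
  ⟨fun i j ↦ by by_cases h : i = j <;> simp [Matrix.one_apply, h],
    fun i ↦ by simp [Matrix.one_apply]⟩

end

section Resolvent

variable {n : Type*} [Fintype n] [DecidableEq n] {P Q : Matrix n n ℝ} {γ : ℝ}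

lemma norm_smul_le_of_normInfM_le_one (hP : normInfM P ≤ 1) (hγ₀ : 0 ≤ γ) :
    ‖γ • P‖ ≤ γ := by
  rw [norm_smul, Real.norm_of_nonneg hγ₀, ← normInfM_eq_norm]
  exact mul_le_of_le_one_right hγ₀ hP

lemma isUnit_one_sub_smul (hP : normInfM P ≤ 1) (hγ₀ : 0 ≤ γ) (hγ₁ : γ < 1) :
    IsUnit (1 - γ • P) :=
  isUnit_one_sub_of_norm_lt_one ((norm_smul_le_of_normInfM_le_one hP hγ₀).trans_lt hγ₁)

lemma normInfM_inv_one_sub_smul_le (hP : normInfM P ≤ 1) (hγ₀ : 0 ≤ γ) (hγ₁ : γ < 1) :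
    normInfM (1 - γ • P)⁻¹ ≤ (1 - γ)⁻¹ := by
  have hγP := norm_smul_le_of_normInfM_le_one hP hγ₀
  have hlt : ‖γ • P‖ < 1 := hγP.trans_lt hγ₁
  have hone : ‖(1 : Matrix n n ℝ)‖ ≤ 1 :=
    normInfM_eq_norm (1 : Matrix n n ℝ) ▸ isStochastic_one.normInfM_le_one
  rw [normInfM_eq_norm, Matrix.nonsing_inv_eq_ringInverse, ← geom_series_eq_inverse _ hlt]
  calc ‖∑' k, (γ • P) ^ k‖ ≤ ‖(1 : Matrix n n ℝ)‖ - 1 + (1 - ‖γ • P‖)⁻¹ :=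
        tsum_geometric_le_of_norm_lt_one _ hlt
    _ ≤ (1 - γ)⁻¹ := by
        have : (1 - ‖γ • P‖)⁻¹ ≤ (1 - γ)⁻¹ := by gcongr
        linarith

lemma inv_one_sub_smul_sub_inv_one_sub_smul (hP : IsUnit (1 - γ • P))
    (hQ : IsUnit (1 - γ • Q)) :
    (1 - γ • P)⁻¹ - (1 - γ • Q)⁻¹ = γ • ((1 - γ • P)⁻¹ * (P - Q) * (1 - γ • Q)⁻¹) := by
  simp only [Matrix.nonsing_inv_eq_ringInverse]
  rw [Ring.inverse_sub_inverse (iff_of_true hP hQ), sub_sub_sub_cancel_left, ← smul_sub,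
    Matrix.mul_smul, Matrix.smul_mul]

lemma norm1_vecMul_inv_one_sub_smul_sub_le (hP : normInfM P ≤ 1) (hQ : normInfM Q ≤ 1)
    (hγ₀ : 0 ≤ γ) (hγ₁ : γ < 1) (x : n → ℝ) :
    norm1 (x ᵥ* (1 - γ • P)⁻¹ - x ᵥ* (1 - γ • Q)⁻¹) ≤
      γ / (1 - γ) * normInfM (P - Q) * normInfM (1 - γ • P)⁻¹ * norm1 x := by
  rw [← Matrix.vecMul_sub, inv_one_sub_smul_sub_inv_one_sub_smul
    (isUnit_one_sub_smul hP hγ₀ hγ₁) (isUnit_one_sub_smul hQ hγ₀ hγ₁)]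
  have hB := normInfM_inv_one_sub_smul_le hQ hγ₀ hγ₁
  set A := 1 - γ • P
  set B := 1 - γ • Q
  have hM : normInfM (γ • (A⁻¹ * (P - Q) * B⁻¹)) ≤
      γ / (1 - γ) * normInfM (P - Q) * normInfM A⁻¹ := by
    simp only [normInfM_eq_norm] at hB ⊢
    calc ‖γ • (A⁻¹ * (P - Q) * B⁻¹)‖ ≤ γ * (‖A⁻¹‖ * ‖P - Q‖ * ‖B⁻¹‖) := by
          rw [norm_smul, Real.norm_of_nonneg hγ₀]
          gcongr
          exact norm_mul₃_le
      _ ≤ γ * (‖A⁻¹‖ * ‖P - Q‖ * (1 - γ)⁻¹) := by gcongr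
      _ = γ / (1 - γ) * ‖P - Q‖ * ‖A⁻¹‖ := by ring
  calc norm1 (x ᵥ* (γ • (A⁻¹ * (P - Q) * B⁻¹)))
        ≤ norm1 x * normInfM (γ • (A⁻¹ * (P - Q) * B⁻¹)) := norm1_vecMul_le _ _
    _ ≤ norm1 x * (γ / (1 - γ) * normInfM (P - Q) * normInfM A⁻¹) := by
        gcongr
        exact Finset.sum_nonneg fun i _ ↦ abs_nonneg (x i)
    _ = _ := mul_comm _ _

end Resolvent

/-- Lemma 3: bound on the difference of discounted state distributions:
`‖ρ^{π'} − (α ρ^π + (1−α) ρ^β)‖₁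
  ≤ (γ/(1−γ)) (α ‖P^{π'} − P^π‖∞ + (1−α) ‖P^{π'} − P^β‖∞) ‖(I − γP^{π'})⁻¹‖∞`. -/
theorem bound_of_mixture_state_distributions (n : ℕ)
    (Pπ' Pπ Pβ : Matrix (Fin n) (Fin n) ℝ)
    (hPπ' : IsStochastic Pπ') (hPπ : IsStochastic Pπ) (hPβ : IsStochastic Pβ)
    (γ : ℝ) (hγ : γ ∈ Set.Ioo (0 : ℝ) 1) (α : ℝ) (hα : α ∈ Set.Icc (0 : ℝ) 1)
    (ρ₀ : Fin n → ℝ) (hρ₀pos : ∀ i, 0 ≤ ρ₀ i) (hρ₀sum : ∑ i, ρ₀ i = 1) :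
    let ρπ' := ρ₀ ᵥ* (1 - γ • Pπ')⁻¹
    let ρπ := ρ₀ ᵥ* (1 - γ • Pπ)⁻¹
    let ρβ := ρ₀ ᵥ* (1 - γ • Pβ)⁻¹
    norm1 (ρπ' - (α • ρπ + (1 - α) • ρβ)) ≤
      γ / (1 - γ) * (α * normInfM (Pπ' - Pπ) + (1 - α) * normInfM (Pπ' - Pβ)) *
        normInfM (1 - γ • Pπ')⁻¹ := by
  intro ρπ' ρπ ρβ
  have hρ₀ : norm1 ρ₀ = 1 := by simpa [norm1, abs_of_nonneg (hρ₀pos _)] using hρ₀sum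
  have hπ := norm1_vecMul_inv_one_sub_smul_sub_le hPπ'.normInfM_le_one hPπ.normInfM_le_one
    hγ.1.le hγ.2 ρ₀
  have hβ := norm1_vecMul_inv_one_sub_smul_sub_le hPπ'.normInfM_le_one hPβ.normInfM_le_one
    hγ.1.le hγ.2 ρ₀
  rw [hρ₀, mul_one] at hπ hβ
  obtain ⟨hα₀, hα₁⟩ := hα
  have hα' : 0 ≤ 1 - α := sub_nonneg.2 hα₁
  calc norm1 (ρπ' - (α • ρπ + (1 - α) • ρβ))
      ≤ α * norm1 (ρπ' - ρπ) + (1 - α) * norm1 (ρπ' - ρβ) :=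
        norm1_sub_convexComb_le _ _ _ hα₀ hα₁
    _ ≤ α * (γ / (1 - γ) * normInfM (Pπ' - Pπ) * normInfM (1 - γ • Pπ')⁻¹) +
          (1 - α) * (γ / (1 - γ) * normInfM (Pπ' - Pβ) * normInfM (1 - γ • Pπ')⁻¹) := by
        gcongr
    _ = _ := by ring
end

section
/- Let S and A be nonempty finite types, γ ∈ (0,1), P a row-stochastic matrix of size |S×A|×|S|, r ∈ ℝ^{S×A} a reward vector, and ρ₀ ∈ ℝ^S a vector with nonnegative entries summing to 1. For a policy π given by a row-stochastic matrix Π^π of size |S|×|S×A| define P^π = Π^πP, r^π = Π^πr, v^π = (I − γP^π)⁻¹r^π, q^π = r + γPv^π, the performance η(π) = ρ₀ᵀv^π, and the discounted state distribution row vector ρ^πᵀ = ρ₀ᵀ(I − γP^π)⁻¹; for two policies π, π′ define the advantage vector Ā^π_{π'} = (Π^{π'} − Π^π)q^π. Then for any two policies π and π′: η(π′) − η(π) = ρ^{π'}ᵀ Ā^π_{π'}. -/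
/-!
The Bellman equation `v^π = Π^π q^π` turns the advantage into
`Ā^π_{π'} = Π^{π'} q^π - v^π = r^{π'} - (I - γ P^{π'}) v^π`.
Applying `(I - γ P^{π'})⁻¹` gives `v^{π'} - v^π`, and pairing with `ρ₀` gives the claim.
For `0 ≤ γ < 1` and stochastic `P^π`, `I - γ P^π` is invertible since it is strictly
diagonally dominant.
-/

open Matrix BigOperators

section PolicyEvaluation

variable {R S X : Type*} [CommRing R] [Fintype S] [Fintype X] [DecidableEq S]
  (γ : R) (pol pol' : Matrix S X R) (P : Matrix X S R) (r : X → R)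

noncomputable def policyValue : S → R :=
  (1 - γ • (pol * P))⁻¹ *ᵥ (pol *ᵥ r)

noncomputable def actionValue : X → R :=
  r + γ • (P *ᵥ policyValue γ pol P r)

theorem one_sub_smul_mulVec_policyValue (h : IsUnit (1 - γ • (pol * P)).det) :
    (1 - γ • (pol * P)) *ᵥ policyValue γ pol P r = pol *ᵥ r := by
  rw [policyValue, mulVec_mulVec, mul_nonsing_inv _ h, one_mulVec]

theorem mulVec_actionValue :
    pol' *ᵥ actionValue γ pol P r =
      pol' *ᵥ r + γ • ((pol' * P) *ᵥ policyValue γ pol P r) := by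
  rw [actionValue, mulVec_add, mulVec_smul, mulVec_mulVec]

theorem mulVec_actionValue_self (h : IsUnit (1 - γ • (pol * P)).det) :
    pol *ᵥ actionValue γ pol P r = policyValue γ pol P r := by
  have bellman := one_sub_smul_mulVec_policyValue γ pol P r h
  rw [sub_mulVec, one_mulVec, smul_mulVec] at bellman
  rw [mulVec_actionValue, ← bellman, sub_add_cancel]

theorem policyValue_sub_policyValue (h : IsUnit (1 - γ • (pol * P)).det)
    (h' : IsUnit (1 - γ • (pol' * P)).det) :
    policyValue γ pol' P r - policyValue γ pol P r =
      (1 - γ • (pol' * P))⁻¹ *ᵥ ((pol' - pol) *ᵥ actionValue γ pol P r) := by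
  have advantage : (pol' - pol) *ᵥ actionValue γ pol P r =
      pol' *ᵥ r - (1 - γ • (pol' * P)) *ᵥ policyValue γ pol P r := by
    rw [sub_mulVec, mulVec_actionValue_self γ pol P r h, mulVec_actionValue,
      sub_mulVec (1 : Matrix S S R), one_mulVec, smul_mulVec]
    abel
  rw [advantage, mulVec_sub, mulVec_mulVec (policyValue γ pol P r), nonsing_inv_mul _ h',
    one_mulVec, policyValue]

end PolicyEvaluation

section Stochastic

variable {m n k : Type*} [Fintype m] [Fintype n] [Fintype k]

theorem IsStochastic.mul {M : Matrix m n ℝ} {N : Matrix n k ℝ}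
    (hM : IsStochastic M) (hN : IsStochastic N) : IsStochastic (M * N) := by
  refine ⟨fun i j => Finset.sum_nonneg fun l _ => mul_nonneg (hM.1 i l) (hN.1 l j), fun i => ?_⟩
  simp only [mul_apply]
  rw [Finset.sum_comm]
  simp only [← Finset.mul_sum, hN.2, mul_one, hM.2]

theorem IsStochastic.sum_erase_diag [DecidableEq n] {M : Matrix n n ℝ} (hM : IsStochastic M)
    (i : n) :
    ∑ j ∈ Finset.univ.erase i, M i j = 1 - M i i := by
  rw [← hM.2 i, ← Finset.add_sum_erase _ _ (Finset.mem_univ i), add_sub_cancel_left]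

theorem IsStochastic.isUnit_det_one_sub_smul [DecidableEq n] {M : Matrix n n ℝ}
    (hM : IsStochastic M) {γ : ℝ} (hγ₀ : 0 ≤ γ) (hγ₁ : γ < 1) :
    IsUnit (1 - γ • M).det := by
  refine isUnit_iff_ne_zero.mpr (det_ne_zero_of_sum_row_lt_diag fun i => ?_)
  have hdiag_le : M i i ≤ 1 :=
    hM.2 i ▸ Finset.single_le_sum (fun j _ => hM.1 i j) (Finset.mem_univ i)
  have off_diag : ∑ j ∈ Finset.univ.erase i, ‖(1 - γ • M) i j‖ = γ * (1 - M i i) := by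
    rw [← hM.sum_erase_diag, Finset.mul_sum]
    refine Finset.sum_congr rfl fun j hj => ?_
    rw [Matrix.sub_apply, one_apply_ne (Finset.ne_of_mem_erase hj).symm, Matrix.smul_apply,
      smul_eq_mul, zero_sub, norm_neg, Real.norm_of_nonneg (mul_nonneg hγ₀ (hM.1 i j))]
  have diag : ‖(1 - γ • M) i i‖ = 1 - γ * M i i := by
    rw [Matrix.sub_apply, one_apply_eq, Matrix.smul_apply, smul_eq_mul, Real.norm_of_nonneg]
    nlinarith
  rw [off_diag, diag]
  linarith

end Stochastic

theorem difference_of_performances_as_advantage_general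
    {S A : Type*} [Fintype S] [Fintype A] [DecidableEq S]
    (γ : ℝ) (hγ : γ ∈ Set.Ioo (0 : ℝ) 1)
    (P : Matrix (S × A) S ℝ) (hP : IsStochastic P)
    (r : S × A → ℝ)
    (ρ₀ : S → ℝ)
    (polπ polπ' : Matrix S (S × A) ℝ)
    (hpolπ : IsStochastic polπ) (hpolπ' : IsStochastic polπ') :
    let Pπ := polπ * P
    let Pπ' := polπ' * P
    let vπ := (1 - γ • Pπ)⁻¹ *ᵥ (polπ *ᵥ r)
    let vπ' := (1 - γ • Pπ')⁻¹ *ᵥ (polπ' *ᵥ r)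
    let qπ := r + γ • (P *ᵥ vπ)
    let Abar := (polπ' - polπ) *ᵥ qπ
    let ρπ' := ρ₀ ᵥ* (1 - γ • Pπ')⁻¹
    ρ₀ ⬝ᵥ vπ' - ρ₀ ⬝ᵥ vπ = ρπ' ⬝ᵥ Abar := by
  intro Pπ Pπ' vπ vπ' qπ Abar ρπ'
  have h := (hpolπ.mul hP).isUnit_det_one_sub_smul hγ.1.le hγ.2
  have h' := (hpolπ'.mul hP).isUnit_det_one_sub_smul hγ.1.le hγ.2
  change ρ₀ ⬝ᵥ policyValue γ polπ' P r - ρ₀ ⬝ᵥ policyValue γ polπ P r =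
    ρπ' ⬝ᵥ ((polπ' - polπ) *ᵥ actionValue γ polπ P r)
  rw [← dotProduct_sub, policyValue_sub_policyValue γ polπ polπ' P r h h', dotProduct_mulVec]

/-- performance difference lemma. `polπ`, `polπ'` are the policy matrices
`Π^π, Π^{π'}`.  With `P^π = Π^πP`, `r^π = Π^πr`, `v^π = (I − γP^π)⁻¹r^π`, `q^π = r + γPv^π`,
`η(π) = ρ₀ᵀv^π`, `ρ^πᵀ = ρ₀ᵀ(I − γP^π)⁻¹`, and `Ā^π_{π'} = (Π^{π'} − Π^π)q^π`:
`η(π′) − η(π) = ρ^{π'}ᵀ Ā^π_{π'}`. -/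
theorem difference_of_performances_as_advantage
    {S A : Type*} [Fintype S] [Fintype A] [Nonempty S] [Nonempty A] [DecidableEq S]
    (γ : ℝ) (hγ : γ ∈ Set.Ioo (0 : ℝ) 1)
    (P : Matrix (S × A) S ℝ) (hP : IsStochastic P)
    (r : S × A → ℝ)
    (ρ₀ : S → ℝ) (hρ₀pos : ∀ s, 0 ≤ ρ₀ s) (hρ₀sum : ∑ s, ρ₀ s = 1)
    (polπ polπ' : Matrix S (S × A) ℝ)
    (hpolπ : IsStochastic polπ) (hpolπ' : IsStochastic polπ') :
    let Pπ := polπ * P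
    let Pπ' := polπ' * P
    let vπ := (1 - γ • Pπ)⁻¹ *ᵥ (polπ *ᵥ r)
    let vπ' := (1 - γ • Pπ')⁻¹ *ᵥ (polπ' *ᵥ r)
    let qπ := r + γ • (P *ᵥ vπ)
    let Abar := (polπ' - polπ) *ᵥ qπ
    let ρπ' := ρ₀ ᵥ* (1 - γ • Pπ')⁻¹
    ρ₀ ⬝ᵥ vπ' - ρ₀ ⬝ᵥ vπ = ρπ' ⬝ᵥ Abar :=
  difference_of_performances_as_advantage_general γ hγ P hP r ρ₀ polπ polπ' hpolπ hpolπ'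
end
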